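/- For 0 < ε < 1, let A = (1/√(1+ε²)) · [[1, 1, −1, −1], [ε, ε, ε, ε]] ∈ ℝ^{2×4} and let L^⊥ = {Aᵀy : y ∈ ℝ²}. Then ρ(A) = ε/√(1+ε²) and σ(L^⊥) = 1. (In particular, σ(L^⊥) can be arbitrarily larger than ρ(A).) -/

import Mathlib

/-!
The unit vector `e₂` gives every column of `A` the value `ε/√(1+ε²)`, and no unit vector does
better: columns 1 and 3 differ only in the sign of their first entry, so one of them sees
`y₁` with a nonpositive sign, leaving at most `ε y₂/√(1+ε²) ≤ ε/√(1+ε²)`.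
For `σ`, the all-ones vector `Aᵀ(0, √(1+ε²)/ε)` lies in `L^⊥`, so each `σ_j` equals `1`.
-/

noncomputable section
open Matrix

/-- The Euclidean norm of a vector in ℝᵐ. -/
def eNorm {m : ℕ} (y : Fin m → ℝ) : ℝ := Real.sqrt (∑ k, y k ^ 2)

/-- The condition measure `ρ(A) := max_{‖y‖₂ = 1} min_{i} ⟨a_i, y⟩`,
where `a_1, …, a_n` are the columns of `A`. -/
def rho {m n : ℕ} (A : Matrix (Fin m) (Fin n) ℝ) : ℝ :=
  sSup {t | ∃ y : Fin m → ℝ, eNorm y = 1 ∧ t = ⨅ i, ∑ k, A k i * y k}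

/-- The ℓ∞ norm of a vector in ℝⁿ. -/
def linf {n : ℕ} (x : Fin n → ℝ) : ℝ := ⨆ j, |x j|

/-- The maximum support index set `J(S)` of a set `S ⊆ ℝⁿ`:
indices `j` such that `x_j > 0` for some nonnegative `x ∈ S`. -/
def maxSupport {n : ℕ} (S : Set (Fin n → ℝ)) : Set (Fin n) :=
  {j | ∃ x ∈ S, (∀ k, 0 ≤ x k) ∧ 0 < x j}

/-- `σ_j(S) := max {x_j : x ∈ S ∩ ℝⁿ₊, ‖x‖_∞ ≤ 1}`. -/
def sigmaJ {n : ℕ} (S : Set (Fin n → ℝ)) (j : Fin n) : ℝ :=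
  sSup {t | ∃ x ∈ S, (∀ k, 0 ≤ x k) ∧ linf x ≤ 1 ∧ x j = t}

open Classical in
/-- `σ(S) := min_{j ∈ J(S)} σ_j(S)` when `J(S) ≠ ∅`, and `σ(S) := 1` otherwise. -/
def sigmaCond {n : ℕ} (S : Set (Fin n → ℝ)) : ℝ :=
  if maxSupport S = ∅ then 1 else sInf (sigmaJ S '' maxSupport S)

/-- The matrix `A = (1/√(1+ε²)) ⬝ [[1, 1, −1, −1], [ε, ε, ε, ε]]`. -/
def A17 (ε : ℝ) : Matrix (Fin 2) (Fin 4) ℝ :=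
  (1 / Real.sqrt (1 + ε ^ 2)) • !![1, 1, -1, -1; ε, ε, ε, ε]

theorem eNorm_eq_one_iff {m : ℕ} (y : Fin m → ℝ) : eNorm y = 1 ↔ ∑ k, y k ^ 2 = 1 :=
  Real.sqrt_eq_one

theorem rho_eq_of_isGreatest {m n : ℕ} {A : Matrix (Fin m) (Fin n) ℝ} {c : ℝ}
    {y₀ : Fin m → ℝ} (hy₀ : eNorm y₀ = 1) (hc : (⨅ i, ∑ k, A k i * y₀ k) = c)
    (hle : ∀ y, eNorm y = 1 → ∃ i, ∑ k, A k i * y k ≤ c) : rho A = c := by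
  refine IsGreatest.csSup_eq ⟨⟨y₀, hy₀, hc.symm⟩, ?_⟩
  rintro t ⟨y, hy, rfl⟩
  obtain ⟨i, hi⟩ := hle y hy
  exact (ciInf_le (Set.finite_range _).bddBelow i).trans hi

theorem abs_le_linf {n : ℕ} (x : Fin n → ℝ) (j : Fin n) : |x j| ≤ linf x :=
  le_ciSup (f := fun k => |x k|) (Set.finite_range _).bddAbove j

theorem sigmaJ_eq_one_of_one_mem {n : ℕ} {S : Set (Fin n → ℝ)} (h : 1 ∈ S) (j : Fin n) :
    sigmaJ S j = 1 := by
  refine IsGreatest.csSup_eq ⟨⟨1, h, fun _ => zero_le_one, ?_, rfl⟩, ?_⟩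
  · exact Real.iSup_le (fun _ => by simp) zero_le_one
  · rintro t ⟨x, -, -, hx, rfl⟩
    exact (le_abs_self _).trans ((abs_le_linf x j).trans hx)

theorem sigmaCond_eq_one_of_one_mem {n : ℕ} {S : Set (Fin n → ℝ)} (h : 1 ∈ S) :
    sigmaCond S = 1 := by
  rw [sigmaCond]
  split_ifs with hJ
  · rfl
  · have hσ : sigmaJ S = fun _ => 1 := funext (sigmaJ_eq_one_of_one_mem h)
    rw [hσ, (Set.nonempty_iff_ne_empty.mpr hJ).image_const, csInf_singleton]

theorem sum_A17_mul (ε : ℝ) (y : Fin 2 → ℝ) (i : Fin 4) :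
    ∑ k, A17 ε k i * y k = (![1, 1, -1, -1] i * y 0 + ε * y 1) / Real.sqrt (1 + ε ^ 2) := by
  fin_cases i <;> simp [A17, Fin.sum_univ_two] <;> ring

theorem rho_A17 {ε : ℝ} (hε : 0 ≤ ε) : rho (A17 ε) = ε / Real.sqrt (1 + ε ^ 2) := by
  refine rho_eq_of_isGreatest (y₀ := ![0, 1]) (by simp [eNorm, Fin.sum_univ_two]) ?_ ?_
  · simp only [sum_A17_mul]
    simp
  · intro y hy
    rw [eNorm_eq_one_iff, Fin.sum_univ_two] at hy
    have hy1 : y 1 ≤ 1 := by nlinarith [sq_nonneg (y 0), sq_nonneg (y 1 - 1)]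
    have hεy : ε * y 1 ≤ ε := mul_le_of_le_one_right hε hy1
    rcases le_total (y 0) 0 with hy0 | hy0
    · exact ⟨0, by rw [sum_A17_mul]; gcongr; simp only [cons_val_zero, one_mul]; linarith⟩
    · exact ⟨2, by rw [sum_A17_mul]; gcongr; simp only [cons_val, neg_mul, one_mul]; linarith⟩

theorem one_mem_range_A17_transpose {ε : ℝ} (hε : ε ≠ 0) :
    1 ∈ LinearMap.range (A17 ε)ᵀ.mulVecLin := by
  refine ⟨![0, Real.sqrt (1 + ε ^ 2) / ε], funext fun i => ?_⟩
  have hs : Real.sqrt (1 + ε ^ 2) ≠ 0 := (Real.sqrt_pos.mpr (by positivity)).ne'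
  simp only [mulVecLin_apply, mulVec, dotProduct, transpose_apply, sum_A17_mul, Pi.one_apply]
  simp [mul_div_cancel₀ _ hε, hs]

theorem rho_and_sigma_of_A17_general (ε : ℝ) (hε0 : 0 < ε) :
    rho (A17 ε) = ε / Real.sqrt (1 + ε ^ 2) ∧
      sigmaCond ((LinearMap.range (A17 ε)ᵀ.mulVecLin : Submodule ℝ (Fin 4 → ℝ)) :
        Set (Fin 4 → ℝ)) = 1 :=
  ⟨rho_A17 hε0.le, sigmaCond_eq_one_of_one_mem (one_mem_range_A17_transpose hε0.ne')⟩

/-- For `0 < ε < 1` and `A = (1/√(1+ε²)) ⬝ [[1, 1, −1, −1], [ε, ε, ε, ε]]` with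
`L^⊥ = {Aᵀy : y ∈ ℝ²}`, one has `ρ(A) = ε/√(1+ε²)` and `σ(L^⊥) = 1`. -/
theorem rho_and_sigma_of_A17 (ε : ℝ) (hε0 : 0 < ε) (hε1 : ε < 1) :
    rho (A17 ε) = ε / Real.sqrt (1 + ε ^ 2) ∧
      sigmaCond ((LinearMap.range (A17 ε)ᵀ.mulVecLin : Submodule ℝ (Fin 4 → ℝ)) :
        Set (Fin 4 → ℝ)) = 1 :=
  rho_and_sigma_of_A17_general ε hε0

end
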